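/- Let A be a 3×3 real matrix with nonnegative entries, spectral radius r(A) = 1, and a_{11} = 0. Then the spread of A satisfies s(A) ≥ 3/4. -/

import Mathlib

open Matrix Polynomial

/-- The eigenvalues of a real square matrix: the multiset of roots (with multiplicity)
of its characteristic polynomial over `ℂ`. -/
noncomputable def eigs {n : ℕ} (A : Matrix (Fin n) (Fin n) ℝ) : Multiset ℂ :=
  ((A.map Complex.ofReal).charpoly).roots

/-- The spectral radius: the maximum of `|λ|` over the eigenvalues `λ`. -/
noncomputable def specRad {n : ℕ} (A : Matrix (Fin n) (Fin n) ℝ) : ℝ :=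
  sSup {r : ℝ | ∃ μ ∈ eigs A, r = ‖μ‖}

/-- The spread: the maximum of `|λ - μ|` over pairs of eigenvalues `λ, μ`. -/
noncomputable def spread {n : ℕ} (A : Matrix (Fin n) (Fin n) ℝ) : ℝ :=
  sSup {r : ℝ | ∃ μ ∈ eigs A, ∃ ν ∈ eigs A, r = ‖μ - ν‖}

/-!
The eigenvalues of a real matrix are closed under conjugation, so those of `A` are either three
reals `u, v, w` or `z, z̄, r` with `r` real. Since `a₁₁ = 0` and `A ≥ 0`, the sum of the `2 × 2`
principal minors is at most `a₂₂ a₃₃ ≤ (tr A)² / 4`; hence the elementary symmetric functions of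
the eigenvalues satisfy `e₁ ≥ 0` and `4 e₂ ≤ e₁²`. Together with `|λ| ≤ 1` for every eigenvalue
and `|λ| = 1` for one of them, these constraints leave no room for three eigenvalues at mutual
distance less than `3/4`; in each of the two cases this is an elementary real inequality.
-/

open ComplexConjugate

namespace Matrix

variable {R : Type*} [CommRing R]

def principalMinorSum₂ (M : Matrix (Fin 3) (Fin 3) R) : R :=
  M 0 0 * M 1 1 - M 0 1 * M 1 0 + M 0 0 * M 2 2 - M 0 2 * M 2 0 + M 1 1 * M 2 2 - M 1 2 * M 2 1

lemma charpoly_fin_three (M : Matrix (Fin 3) (Fin 3) R) :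
    M.charpoly = X ^ 3 - C M.trace * X ^ 2 + C M.principalMinorSum₂ * X - C M.det := by
  simp only [charpoly, det_fin_three, charmatrix_apply, trace_fin_three, principalMinorSum₂]
  simp only [Fin.isValue, diagonal_apply_eq, ne_eq, Fin.reduceEq, not_false_eq_true,
    diagonal_apply_ne, map_add, map_sub, map_mul]
  ring

lemma four_mul_principalMinorSum₂_le_trace_sq {A : Matrix (Fin 3) (Fin 3) ℝ}
    (hA : ∀ i j, 0 ≤ A i j) (h00 : A 0 0 = 0) : 4 * A.principalMinorSum₂ ≤ A.trace ^ 2 := by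
  simp only [principalMinorSum₂, trace_fin_three, h00]
  nlinarith [mul_nonneg (hA 0 1) (hA 1 0), mul_nonneg (hA 0 2) (hA 2 0),
    mul_nonneg (hA 1 2) (hA 2 1), sq_nonneg (A 1 1 - A 2 2)]

end Matrix

section eigs

variable {n : ℕ} (A : Matrix (Fin n) (Fin n) ℝ)

lemma charpoly_map_ofReal : (A.map Complex.ofReal).charpoly = A.charpoly.map Complex.ofRealHom :=
  A.charpoly_map Complex.ofRealHom

lemma card_eigs : (eigs A).card = n := by
  rw [eigs, splits_iff_card_roots.mp (IsAlgClosed.splits _), charpoly_natDegree_eq_dim,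
    Fintype.card_fin]

lemma eigs_map_conj : (eigs A).map conj = eigs A := by
  rw [eigs, ← (IsAlgClosed.splits _).roots_map_of_injective (starRingEnd ℂ).injective,
    charpoly_map_ofReal, Polynomial.map_map]
  congr 2
  ext r
  simp only [RingHom.coe_comp, Function.comp_apply, Complex.ofRealHom_eq_coe, Complex.conj_ofReal]

lemma esymm_eigs {k : ℕ} (hk : k ≤ n) :
    (eigs A).esymm k = (-1) ^ k * (A.charpoly.coeff (n - k) : ℂ) := by
  have hdeg : (A.map Complex.ofReal).charpoly.natDegree = n := by
    rw [charpoly_natDegree_eq_dim, Fintype.card_fin]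
  have vieta := coeff_eq_esymm_roots_of_splits
    (IsAlgClosed.splits (A.map Complex.ofReal).charpoly) (k := n - k) (by omega)
  rw [(charpoly_monic _).leadingCoeff, hdeg, Nat.sub_sub_self hk, charpoly_map_ofReal,
    coeff_map] at vieta
  rw [eigs, charpoly_map_ofReal, ← Complex.ofRealHom_eq_coe, vieta, one_mul, ← mul_assoc,
    ← mul_pow]
  norm_num

lemma finite_norm_eigs : {r : ℝ | ∃ μ ∈ eigs A, r = ‖μ‖}.Finite :=
  ((eigs A).finite_toSet.image (‖·‖)).subset (by rintro _ ⟨μ, hμ, rfl⟩; exact ⟨μ, hμ, rfl⟩)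

lemma finite_norm_sub_eigs : {r : ℝ | ∃ μ ∈ eigs A, ∃ ν ∈ eigs A, r = ‖μ - ν‖}.Finite :=
  ((eigs A).finite_toSet.image2 (fun μ ν => ‖μ - ν‖) (eigs A).finite_toSet).subset
    (by rintro _ ⟨μ, hμ, ν, hν, rfl⟩; exact ⟨μ, hμ, ν, hν, rfl⟩)

lemma exists_norm_eq_specRad (hn : n ≠ 0) : ∃ μ ∈ eigs A, ‖μ‖ = specRad A := by
  obtain ⟨μ, hμ⟩ := Multiset.card_pos_iff_exists_mem.mp
    (by rw [card_eigs A]; exact Nat.pos_of_ne_zero hn)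
  have hne : {r : ℝ | ∃ μ ∈ eigs A, r = ‖μ‖}.Nonempty := ⟨_, μ, hμ, rfl⟩
  obtain ⟨ν, hν, h⟩ := hne.csSup_mem (finite_norm_eigs A)
  exact ⟨ν, hν, h.symm⟩

variable {A}

lemma norm_le_specRad {μ : ℂ} (hμ : μ ∈ eigs A) : ‖μ‖ ≤ specRad A :=
  le_csSup (finite_norm_eigs A).bddAbove ⟨μ, hμ, rfl⟩

lemma norm_sub_le_spread {μ ν : ℂ} (hμ : μ ∈ eigs A) (hν : ν ∈ eigs A) : ‖μ - ν‖ ≤ spread A :=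
  le_csSup (finite_norm_sub_eigs A).bddAbove ⟨μ, hμ, ν, hν, rfl⟩

end eigs

lemma esymm_eigs_fin_three (A : Matrix (Fin 3) (Fin 3) ℝ) :
    (eigs A).esymm 1 = A.trace ∧ (eigs A).esymm 2 = A.principalMinorSum₂ := by
  rw [esymm_eigs A (by norm_num), esymm_eigs A (by norm_num)]
  simp [charpoly_fin_three, coeff_C]

lemma three_quarters_le_abs_sub_of_abs_eq_one {u v w : ℝ} (hu : |u| = 1) (hv : |v| ≤ 1)
    (hw : |w| ≤ 1) (hT : 0 ≤ u + v + w) (hQ : 4 * (u * v + u * w + v * w) ≤ (u + v + w) ^ 2) :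
    3 / 4 ≤ |u - v| ∨ 3 / 4 ≤ |u - w| := by
  rw [abs_le] at hv hw
  rcases abs_eq zero_le_one |>.mp hu with rfl | rfl
  · by_contra! ⟨hv', hw'⟩
    rw [abs_lt] at hv' hw'
    -- For `v, w ∈ (1/4, 1]`, `(1 + v + w)² - 4(v + w + vw) = ((√v - √w)² - 1)((√v + √w)² - 1) < 0`.
    nlinarith [mul_pos (show (0:ℝ) < v - 1/4 by linarith) (show (0:ℝ) < w - 1/4 by linarith),
      mul_pos (show (0:ℝ) < v + w - 1/2 by linarith) (show (0:ℝ) < 5/2 - (v+w) by linarith)]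
  · left
    rw [abs_sub_comm, abs_of_nonneg (by linarith)]
    linarith

lemma three_quarters_le_abs_sub {u v w : ℝ} (hu : |u| ≤ 1) (hv : |v| ≤ 1) (hw : |w| ≤ 1)
    (hone : |u| = 1 ∨ |v| = 1 ∨ |w| = 1) (hT : 0 ≤ u + v + w)
    (hQ : 4 * (u * v + u * w + v * w) ≤ (u + v + w) ^ 2) :
    3 / 4 ≤ |u - v| ∨ 3 / 4 ≤ |u - w| ∨ 3 / 4 ≤ |v - w| := by
  rcases hone with h | h | h
  · have := three_quarters_le_abs_sub_of_abs_eq_one h hv hw hT hQ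
    tauto
  · have := three_quarters_le_abs_sub_of_abs_eq_one h hu hw (by linarith) (by linarith)
    rw [abs_sub_comm v u] at this
    tauto
  · have := three_quarters_le_abs_sub_of_abs_eq_one h hu hv (by linarith) (by linarith)
    rw [abs_sub_comm w u, abs_sub_comm w v] at this
    tauto

lemma nine_sixteenths_le_of_conj_pair {x y r : ℝ} (hr : |r| ≤ 1)
    (hone : x ^ 2 + y ^ 2 = 1 ∨ |r| = 1) (hT : 0 ≤ 2 * x + r)
    (hQ : 4 * (x ^ 2 + y ^ 2 + 2 * r * x) ≤ (2 * x + r) ^ 2) :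
    9 / 16 ≤ (2 * y) ^ 2 ∨ 9 / 16 ≤ (x - r) ^ 2 + y ^ 2 := by
  by_contra! ⟨hy, hd⟩
  have key : 4 * y ^ 2 ≤ r * (r - 4 * x) := by linarith
  rw [abs_le] at hr
  rcases hone with hunit | hr1
  · have hx : 55 / 64 < x ^ 2 := by linarith
    rcases le_or_gt r 0 with hr0 | hr0
    · nlinarith
    · have : x ≤ 1 / 4 := by nlinarith
      nlinarith
  · rcases abs_eq zero_le_one |>.mp hr1 with rfl | rfl
    · nlinarith
    · nlinarith

lemma three_quarters_le_norm_sub_of_conj_pair {z : ℂ} {r : ℝ} (hr : |r| ≤ 1)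
    (hone : ‖z‖ = 1 ∨ |r| = 1) (hT : 0 ≤ 2 * z.re + r)
    (hQ : 4 * (Complex.normSq z + 2 * r * z.re) ≤ (2 * z.re + r) ^ 2) :
    3 / 4 ≤ ‖z - conj z‖ ∨ 3 / 4 ≤ ‖z - r‖ := by
  have hnorm : ‖z‖ ^ 2 = z.re ^ 2 + z.im ^ 2 := by
    rw [Complex.sq_norm, Complex.normSq_apply]; ring
  have hconj : ‖z - conj z‖ ^ 2 = (2 * z.im) ^ 2 := by
    rw [Complex.sub_conj, norm_mul, Complex.norm_I, mul_one, Complex.norm_real, Real.norm_eq_abs,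
      sq_abs]
  have hsub : ‖z - r‖ ^ 2 = (z.re - r) ^ 2 + z.im ^ 2 := by
    rw [Complex.sq_norm, Complex.normSq_apply, Complex.sub_re, Complex.sub_im, Complex.ofReal_re,
      Complex.ofReal_im, sub_zero]
    ring
  have hone' : z.re ^ 2 + z.im ^ 2 = 1 ∨ |r| = 1 :=
    hone.imp_left fun h => by rw [← hnorm, h, one_pow]
  rw [Complex.normSq_apply] at hQ
  have := nine_sixteenths_le_of_conj_pair hr hone' hT (by linarith)
  rw [← hconj, ← hsub] at this
  refine this.imp (fun h => ?_) (fun h => ?_) <;>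
    exact le_of_sq_le_sq (by linarith) (norm_nonneg _)

namespace Multiset

lemma eq_ofReal_triple_or_conj_pair {s : Multiset ℂ} (hs : card s = 3)
    (hconj : s.map conj = s) :
    (∃ u v w : ℝ, s = {(u : ℂ), (v : ℂ), (w : ℂ)}) ∨
      ∃ z : ℂ, ∃ r : ℝ, s = {z, conj z, (r : ℂ)} := by
  by_cases hreal : ∀ z ∈ s, conj z = z
  · obtain ⟨a, b, c, rfl⟩ := card_eq_three.mp hs
    simp only [insert_eq_cons, mem_cons, mem_singleton, forall_eq_or_imp, forall_eq,
      Complex.conj_eq_iff_re] at hreal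
    exact Or.inl ⟨a.re, b.re, c.re, by rw [hreal.1, hreal.2.1, hreal.2.2]⟩
  obtain ⟨z, hz, hz_ne⟩ : ∃ z ∈ s, conj z ≠ z := by simpa using hreal
  obtain ⟨t, rfl⟩ := exists_cons_of_mem hz
  have hzt : conj z ∈ t := by
    have : conj z ∈ z ::ₘ t := hconj ▸ mem_map_of_mem _ hz
    exact (mem_cons.mp this).resolve_left hz_ne
  obtain ⟨t', rfl⟩ := exists_cons_of_mem hzt
  obtain ⟨w, rfl⟩ := card_eq_one.mp (by simpa using hs)
  have hw : conj w = w := by simpa [cons_swap] using hconj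
  exact Or.inr ⟨z, w.re, by rw [Complex.conj_eq_iff_re.mp hw]; rfl⟩

lemma esymm_one_triple {R : Type*} [CommSemiring R] (a b c : R) :
    ({a, b, c} : Multiset R).esymm 1 = a + b + c := by
  simp [esymm, powersetCard_one, add_comm, add_left_comm]

lemma esymm_two_triple {R : Type*} [CommSemiring R] (a b c : R) :
    ({a, b, c} : Multiset R).esymm 2 = a * b + a * c + b * c := by
  simp [esymm, powersetCard_one, add_assoc, add_comm]

lemma exists_three_quarters_le_norm_sub {s : Multiset ℂ} (hs : card s = 3)
    (hconj : s.map conj = s) (hle : ∀ z ∈ s, ‖z‖ ≤ 1) (hone : ∃ z ∈ s, ‖z‖ = 1) {T Q : ℝ}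
    (h1 : s.esymm 1 = T) (h2 : s.esymm 2 = Q) (hT : 0 ≤ T) (hQ : 4 * Q ≤ T ^ 2) :
    ∃ μ ∈ s, ∃ ν ∈ s, 3 / 4 ≤ ‖μ - ν‖ := by
  rcases eq_ofReal_triple_or_conj_pair hs hconj with ⟨u, v, w, rfl⟩ | ⟨z, r, rfl⟩
  · rw [esymm_one_triple] at h1
    rw [esymm_two_triple] at h2
    have hT' : u + v + w = T := by exact_mod_cast h1
    have hQ' : u * v + u * w + v * w = Q := by exact_mod_cast h2
    subst hT' hQ'
    have habs (a : ℝ) (ha : (a : ℂ) ∈ ({(u : ℂ), (v : ℂ), (w : ℂ)} : Multiset ℂ)) : |a| ≤ 1 := by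
      simpa using hle a ha
    have hdist (a b : ℝ) : ‖(a : ℂ) - b‖ = |a - b| := by
      rw [← Complex.ofReal_sub, Complex.norm_real, Real.norm_eq_abs]
    rcases three_quarters_le_abs_sub (habs u (by simp)) (habs v (by simp)) (habs w (by simp))
      (by simpa using hone) hT hQ with h | h | h
    · exact ⟨u, by simp, v, by simp, by rwa [hdist]⟩
    · exact ⟨u, by simp, w, by simp, by rwa [hdist]⟩
    · exact ⟨v, by simp, w, by simp, by rwa [hdist]⟩
  · rw [esymm_one_triple] at h1
    rw [esymm_two_triple] at h2
    have hT' : 2 * z.re + r = T := by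
      have := congrArg Complex.re h1
      simp only [Complex.add_re, Complex.conj_re, Complex.ofReal_re] at this
      linarith
    have hQ' : Complex.normSq z + 2 * r * z.re = Q := by
      have := congrArg Complex.re h2
      simp only [Complex.add_re, Complex.mul_re, Complex.conj_re, Complex.conj_im,
        Complex.ofReal_re, Complex.ofReal_im] at this
      rw [Complex.normSq_apply]
      linarith
    subst hT' hQ'
    rcases three_quarters_le_norm_sub_of_conj_pair (by simpa using hle r (by simp))
      (by simpa using hone) hT hQ with h | h
    · exact ⟨z, by simp, conj z, by simp, h⟩
    · exact ⟨z, by simp, r, by simp, h⟩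

end Multiset

theorem spread_ge_three_by_three (A : Matrix (Fin 3) (Fin 3) ℝ)
    (hA : ∀ i j, 0 ≤ A i j) (hr : specRad A = 1) (h11 : A 0 0 = 0) :
    (3 : ℝ) / 4 ≤ spread A := by
  obtain ⟨he1, he2⟩ := esymm_eigs_fin_three A
  obtain ⟨μ₀, hμ₀, hμ₀_norm⟩ := exists_norm_eq_specRad A three_ne_zero
  obtain ⟨μ, hμ, ν, hν, h⟩ := Multiset.exists_three_quarters_le_norm_sub (card_eigs A)
    (eigs_map_conj A) (fun μ hμ => hr ▸ norm_le_specRad hμ) ⟨μ₀, hμ₀, hμ₀_norm.trans hr⟩ he1 he2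
    (Finset.sum_nonneg fun i _ => hA i i) (four_mul_principalMinorSum₂_le_trace_sq hA h11)
  exact h.trans (norm_sub_le_spread hμ hν)
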